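/- arXiv:1612.07113 — 3 statements merged into one kernel-verified Lean document; each statement's English description precedes it below -/
import Mathlib

section
/- If G is a bipartite graph with two distinct vertices u and v satisfying N(u) = N(v), then the readability of G equals the readability of G − u. -/
/-- `OvAt s t k` : `s` overlaps `t` by `k`, i.e. `k` is positive, at most both lengths,
and the length-`k` suffix of `s` equals the length-`k` prefix of `t`. -/
def OvAt {α : Type} (s t : List α) (k : ℕ) : Prop :=
  0 < k ∧ k ≤ s.length ∧ k ≤ t.length ∧ s.drop (s.length - k) = t.take k

/-- `s` overlaps `t` (by some positive length). -/
def Overlaps {α : Type} (s t : List α) : Prop := ∃ k, OvAt s t k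

/-- the minimum positive overlap length of `s` over `t` (0 if none exists). -/
noncomputable def ovMin {α : Type} (s t : List α) : ℕ := sInf {k | OvAt s t k}

/-- A bipartite graph, given as a relation `E` between the two parts `S` and `T`,
has an overlap labeling with all strings of length `k`. -/
def HasOLab {S T : Type} (E : S → T → Prop) (k : ℕ) : Prop :=
  ∃ (α : Type) (ℓS : S → List α) (ℓT : T → List α),
    (∀ u, (ℓS u).length = k) ∧ (∀ v, (ℓT v).length = k) ∧
    ∀ u v, E u v ↔ Overlaps (ℓS u) (ℓT v)

/-- The readability of a bipartite graph: minimum length of an overlap labeling. -/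
noncomputable def readability {S T : Type} (E : S → T → Prop) : ℕ :=
  sInf {k | HasOLab E k}

/-- Deleting one of two twin vertices (vertices with equal open neighborhoods)
does not change the readability of a bipartite graph. -/
theorem readability_delete_twin
    {S T : Type} (E : S → T → Prop) (u v : S) (huv : u ≠ v)
    (htwin : ∀ t, E u t ↔ E v t) :
    readability E = readability (fun (s : {s : S // s ≠ u}) (t : T) => E s.1 t) := by
  classical
  unfold readability
  congr 1
  ext k
  constructor
  · rintro ⟨α, ℓS, ℓT, hS, hT, hE⟩
    exact ⟨α, fun s => ℓS s.1, ℓT, fun s => hS s.1, hT, fun s t => hE s.1 t⟩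
  · rintro ⟨α, ℓS, ℓT, hS, hT, hE⟩
    refine ⟨α, fun s => if h : s = u then ℓS ⟨v, huv.symm⟩ else ℓS ⟨s, h⟩, ℓT, ?_, hT, ?_⟩
    · intro s; by_cases h : s = u <;> simp [h, hS]
    · intro s t
      by_cases h : s = u
      · subst h
        simp only [dif_pos rfl]
        rw [htwin t]
        exact hE ⟨v, huv.symm⟩ t
      · simp only [dif_neg h]
        exact hE ⟨s, h⟩ t
end

section
/- For every bipartite graph G of maximum degree at least two, the readability of G is at least dt(G) + 1, where dt(G) is the distinctness of G. -/
lemma Nat.log2_le_log2 {m n : ℕ} (h : m ≤ n) : m.log2 ≤ n.log2 := by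
  simpa only [Nat.log2_eq_log_two] using Nat.log_mono_right h

lemma Nat.sub_two_pow_log2_lt {m : ℕ} : m - 2 ^ m.log2 < 2 ^ m.log2 := by
  have := Nat.lt_log2_self (n := m)
  rw [Nat.pow_succ] at this
  omega

lemma Nat.testBit_iff_eq_log2_or_testBit_sub {m z : ℕ} (h : m ≠ 0) :
    m.testBit z ↔ z = m.log2 ∨ (m - 2 ^ m.log2).testBit z := by
  have hm : m = 2 ^ m.log2 + (m - 2 ^ m.log2) := (Nat.add_sub_cancel' (Nat.log2_self_le h)).symm
  have hr : m - 2 ^ m.log2 < 2 ^ m.log2 := Nat.sub_two_pow_log2_lt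
  generalize m - 2 ^ m.log2 = r at hm hr ⊢
  set y := m.log2
  rcases lt_trichotomy z y with hz | rfl | hz
  · rw [hm, Nat.testBit_two_pow_add_gt hz]
    simp [hz.ne]
  · rw [hm, Nat.testBit_two_pow_add_eq, Nat.testBit_lt_two_pow hr]
    simp
  · have hm' : m < 2 ^ z := Nat.lt_log2_self.trans_le (Nat.pow_le_pow_right two_pos hz)
    have hr' : r < 2 ^ z := hr.trans (Nat.pow_lt_pow_right one_lt_two hz)
    simp [Nat.testBit_lt_two_pow hm', Nat.testBit_lt_two_pow hr', hz.ne']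

lemma Nat.testBit_sum_two_pow (s : Finset ℕ) (z : ℕ) : (∑ i ∈ s, 2 ^ i).testBit z ↔ z ∈ s := by
  rw [← Nat.mem_bitIndices, ← List.mem_toFinset, Finset.toFinset_bitIndices_sum_two_pow]

lemma List.exists_mem_of_suffix_append {α : Type} {l a b : List α} (h : l <:+ a ++ b)
    (hlen : b.length < l.length) : ∃ x ∈ a, x ∈ l := by
  obtain ⟨y, hy⟩ := h
  rcases List.append_eq_append_iff.1 hy with ⟨a', rfl, rfl⟩ | ⟨c, rfl, rfl⟩
  · obtain ⟨x, hx⟩ := List.exists_mem_of_ne_nil a' (by rintro rfl; simp at hlen)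
    exact ⟨x, List.mem_append_right _ hx, List.mem_append_left _ hx⟩
  · simp at hlen

lemma List.exists_mem_of_prefix_append {α : Type} {l a b : List α} (h : l <+: a ++ b)
    (hlen : a.length < l.length) : ∃ x ∈ b, x ∈ l := by
  obtain ⟨y, hy⟩ := h
  rcases List.append_eq_append_iff.1 hy with ⟨a', rfl, rfl⟩ | ⟨c, rfl, rfl⟩
  · simp at hlen
  · obtain ⟨x, hx⟩ := List.exists_mem_of_ne_nil c (by rintro rfl; simp at hlen)
    exact ⟨x, List.mem_append_left _ hx, List.mem_append_right _ hx⟩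

lemma List.rtake_rtake_of_le {α : Type} (l : List α) {i j : ℕ} (h : i ≤ j) :
    (l.rtake j).rtake i = l.rtake i := by
  simp only [List.rtake_eq_reverse_take_reverse, List.reverse_reverse, List.take_take,
    min_eq_left h]

lemma exists_ne_of_two_le_card {X : Type} (h : 2 ≤ Nat.card X) : ∃ a b : X, a ≠ b :=
  have : Finite X := Nat.finite_of_card_ne_zero (by omega)
  (Finite.one_lt_card_iff_nontrivial.1 h).exists_pair_ne

lemma overlaps_iff {α : Type} {s t : List α} :
    Overlaps s t ↔ ∃ l, l ≠ [] ∧ l <:+ s ∧ l <+: t := by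
  constructor
  · rintro ⟨k, hk0, hks, hkt, h⟩
    refine ⟨t.take k, ?_, h ▸ List.drop_suffix _ _, List.take_prefix _ _⟩
    rw [← List.length_pos_iff, List.length_take]
    omega
  · rintro ⟨l, hl, hls, hlt⟩
    refine ⟨l.length, List.length_pos_iff.2 hl, hls.length_le, hlt.length_le, ?_⟩
    rw [← List.suffix_iff_eq_drop.1 hls, ← List.prefix_iff_eq_take.1 hlt]

lemma overlaps_reverse {α : Type} {s t : List α} :
    Overlaps t.reverse s.reverse ↔ Overlaps s t := by
  simp only [overlaps_iff]
  constructor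
  · rintro ⟨l, hl, hls, hlt⟩
    exact ⟨l.reverse, by simpa using hl, List.reverse_prefix.1 (by simpa using hlt),
      List.reverse_suffix.1 (by simpa using hls)⟩
  · rintro ⟨l, hl, hls, hlt⟩
    exact ⟨l.reverse, by simpa using hl, List.reverse_suffix.2 hlt, List.reverse_prefix.2 hls⟩

lemma overlaps_replicate_append_append_replicate {α : Type} {s t : List α} {c d : α}
    (hcd : c ≠ d) (hc : c ∉ t) (hd : d ∉ s) (i j : ℕ) :
    Overlaps (List.replicate i c ++ s) (t ++ List.replicate j d) ↔ Overlaps s t := by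
  simp only [overlaps_iff]
  refine ⟨fun ⟨l, hl, hls, hlt⟩ => ⟨l, hl, ?_, ?_⟩, fun ⟨l, hl, hls, hlt⟩ =>
    ⟨l, hl, hls.trans (List.suffix_append _ _), hlt.trans (List.prefix_append _ _)⟩⟩
  · refine List.suffix_of_suffix_length_le hls (List.suffix_append _ _) (not_lt.1 fun hlen => ?_)
    obtain ⟨x, hx, hxl⟩ := List.exists_mem_of_suffix_append hls hlen
    rw [List.eq_of_mem_replicate hx] at hxl
    rcases List.mem_append.1 (hlt.subset hxl) with h | h
    · exact hc h
    · exact hcd (List.eq_of_mem_replicate h)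
  · refine List.prefix_of_prefix_length_le hlt (List.prefix_append _ _) (not_lt.1 fun hlen => ?_)
    obtain ⟨x, hx, hxl⟩ := List.exists_mem_of_prefix_append hlt hlen
    rw [List.eq_of_mem_replicate hx] at hxl
    rcases List.mem_append.1 (hls.subset hxl) with h | h
    · exact hcd (List.eq_of_mem_replicate h).symm
    · exact hd h

lemma hasOLab_of_overlaps_iff {S T α : Type} {E : S → T → Prop} (ℓS : S → List α)
    (ℓT : T → List α) (hE : ∀ u v, E u v ↔ Overlaps (ℓS u) (ℓT v)) {c d : α} (hcd : c ≠ d)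
    (hc : ∀ v, c ∉ ℓT v) (hd : ∀ u, d ∉ ℓS u) {k : ℕ} (hS : ∀ u, (ℓS u).length ≤ k)
    (hT : ∀ v, (ℓT v).length ≤ k) : HasOLab E k :=
  ⟨α, fun u => List.replicate (k - (ℓS u).length) c ++ ℓS u,
    fun v => ℓT v ++ List.replicate (k - (ℓT v).length) d,
    fun u => by simp [Nat.sub_add_cancel (hS u)],
    fun v => by simp [Nat.add_sub_cancel' (hT v)],
    fun u v => (hE u v).trans
      (overlaps_replicate_append_append_replicate hcd (hc v) (hd u) _ _).symm⟩

lemma OvAt.take_eq_take {α : Type} {s t t' : List α} {i : ℕ} (h : OvAt s t i)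
    (h' : OvAt s t' i) : t.take i = t'.take i :=
  h.2.2.2.symm.trans h'.2.2.2

lemma OvAt.of_rtake_eq {α : Type} {s s' t : List α} {i j : ℕ} (h : OvAt s t i) (hij : i ≤ j)
    (hs : s.rtake j = s'.rtake j) (hlen : s.length = s'.length) : OvAt s' t i := by
  refine ⟨h.1, hlen ▸ h.2.1, h.2.2.1, ?_⟩
  change s'.rtake i = t.take i
  rw [← List.rtake_rtake_of_le s' hij, ← hs, List.rtake_rtake_of_le s hij]
  exact h.2.2.2

lemma card_le_card_of_forall_ovAt {ι α : Type} {p : ι → Prop} (s : List α) (ℓ : ι → List α)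
    {J : Finset ℕ} (hcover : ∀ t, p t → ∃ j ∈ J, OvAt s (ℓ t) j)
    (hsep : ∀ j ∈ J, Function.Injective fun t => (ℓ t).take j) :
    Nat.card {t // p t} ≤ J.card := by
  choose f hfJ hf using fun t : {t // p t} => hcover t t.2
  refine (Nat.card_le_card_of_injective (fun t => (⟨f t, hfJ t⟩ : J)) fun t t' htt' => ?_).trans
    (Nat.card_eq_finsetCard J).le
  have hj : f t = f t' := congrArg Subtype.val htt'
  exact Subtype.ext (hsep _ (hfJ t) (OvAt.take_eq_take (hf t) (hj ▸ hf t')))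

inductive Letter : Type
  | head : ℕ → Letter
  | sep : ℕ → Letter
  | padLeft : Letter
  | padRight : Letter

namespace Letter

def IndexLE (n : ℕ) : Letter → Prop
  | head y => y ≤ n
  | sep y => y ≤ n
  | _ => False

lemma IndexLE.mono {n n' : ℕ} {c : Letter} (h : c.IndexLE n) (hn : n ≤ n') : c.IndexLE n' := by
  cases c <;> simp only [IndexLE] at h ⊢ <;> omega

end Letter

open Letter

def leftWord : ℕ → List Letter
  | 0 => []
  | m + 1 =>
    head (m + 1).log2 :: (List.range (m + 1 - 2 ^ (m + 1).log2 + 1)).attach.flatMap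
      fun b => sep (m + 1).log2 :: leftWord b.1
decreasing_by
  have := List.mem_range.1 b.2
  have := Nat.log2_self_le m.succ_ne_zero
  have := Nat.two_pow_pos (m + 1).log2
  omega

def rightWord (y : ℕ) : List Letter :=
  head y :: (List.range (2 ^ y)).flatMap fun b => sep y :: leftWord b

lemma leftWord_of_ne_zero {m : ℕ} (h : m ≠ 0) :
    leftWord m = head m.log2 ::
      (List.range (m - 2 ^ m.log2 + 1)).flatMap fun b => sep m.log2 :: leftWord b := by
  obtain ⟨m, rfl⟩ := Nat.exists_eq_succ_of_ne_zero h
  rw [leftWord]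
  simp only [List.flatMap_subtype, List.unattach_attach]

lemma leftWord_prefix_rightWord {m : ℕ} (h : m ≠ 0) : leftWord m <+: rightWord m.log2 := by
  obtain ⟨t, ht⟩ : List.range (m - 2 ^ m.log2 + 1) <+: List.range (2 ^ m.log2) := by
    rw [List.prefix_iff_eq_take, List.length_range, List.take_range,
      min_eq_left Nat.sub_two_pow_log2_lt]
  rw [leftWord_of_ne_zero h, rightWord, ← ht, List.flatMap_append]
  exact (List.prefix_cons_inj _).2 (List.prefix_append _ _)

lemma sep_cons_leftWord_suffix {m : ℕ} (h : m ≠ 0) :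
    sep m.log2 :: leftWord (m - 2 ^ m.log2) <:+ leftWord m := by
  rw [leftWord_of_ne_zero h, List.range_succ, List.flatMap_append, List.flatMap_singleton]
  exact (List.suffix_append _ _).trans (List.suffix_cons _ _)

lemma indexLE_of_mem_leftWord {c : Letter} {m : ℕ} (hc : c ∈ leftWord m) :
    c.IndexLE m.log2 := by
  induction m using Nat.strong_induction_on with
  | _ m ih =>
    rcases eq_or_ne m 0 with rfl | h
    · simp [leftWord] at hc
    rw [leftWord_of_ne_zero h] at hc
    simp only [List.mem_cons, List.mem_flatMap, List.mem_range] at hc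
    rcases hc with rfl | ⟨b, hb, rfl | hc⟩
    · exact le_rfl
    · exact le_rfl
    · have := Nat.log2_self_le h
      have := Nat.two_pow_pos m.log2
      exact (ih b (by omega) hc).mono (Nat.log2_le_log2 (by omega))

lemma indexLE_of_mem_rightWord {c : Letter} {y : ℕ} (hc : c ∈ rightWord y) : c.IndexLE y := by
  simp only [rightWord, List.mem_cons, List.mem_flatMap, List.mem_range] at hc
  rcases hc with rfl | ⟨b, hb, rfl | hc⟩
  · exact le_rfl
  · exact le_rfl
  · exact (indexLE_of_mem_leftWord hc).mono (Nat.log2_two_pow (n := y) ▸ Nat.log2_le_log2 hb.le)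

lemma exists_suffix_prefix_of_testBit {m z : ℕ} (hz : m.testBit z) :
    ∃ l, l ≠ [] ∧ l <:+ leftWord m ∧ l <+: rightWord z := by
  induction m using Nat.strong_induction_on with
  | _ m ih =>
    have h : m ≠ 0 := by rintro rfl; simp at hz
    rcases (Nat.testBit_iff_eq_log2_or_testBit_sub h).1 hz with rfl | hr
    · exact ⟨leftWord m, by simp [leftWord_of_ne_zero h], List.suffix_refl _,
        leftWord_prefix_rightWord h⟩
    · obtain ⟨l, hl, hls, hlt⟩ := ih _ (Nat.sub_lt (Nat.pos_of_ne_zero h) (Nat.two_pow_pos _)) hr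
      exact ⟨l, hl, hls.trans ((List.suffix_cons _ _).trans (sep_cons_leftWord_suffix h)), hlt⟩

lemma testBit_of_suffix_of_prefix {m z : ℕ} {l : List Letter} (hl : l ≠ [])
    (hls : l <:+ leftWord m) (hlt : l <+: rightWord z) : m.testBit z := by
  obtain ⟨l, rfl⟩ : ∃ l', l = head z :: l' := by
    obtain ⟨a, l', rfl⟩ := List.exists_cons_of_ne_nil hl
    rw [rightWord, List.cons_prefix_cons] at hlt
    exact ⟨l', by rw [hlt.1]⟩
  induction m using Nat.strong_induction_on with
  | _ m ih =>
    have h : m ≠ 0 := by rintro rfl; simp [leftWord] at hls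
    rw [Nat.testBit_iff_eq_log2_or_testBit_sub h]
    rcases List.suffix_or_suffix_of_suffix hls (sep_cons_leftWord_suffix h) with hsuf | hsuf
    · rcases List.suffix_cons_iff.1 hsuf with heq | hsuf
      · simp at heq
      · exact Or.inr (ih _ (Nat.sub_lt (Nat.pos_of_ne_zero h) (Nat.two_pow_pos _)) hsuf)
    · have h₁ : z ≤ m.log2 := indexLE_of_mem_leftWord (hls.subset List.mem_cons_self)
      have h₂ : m.log2 ≤ z :=
        indexLE_of_mem_rightWord (hlt.subset (hsuf.subset List.mem_cons_self))
      exact Or.inl (le_antisymm h₁ h₂)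

lemma overlaps_leftWord_rightWord {m z : ℕ} :
    Overlaps (leftWord m) (rightWord z) ↔ m.testBit z :=
  overlaps_iff.trans ⟨fun ⟨_, hl, hls, hlt⟩ => testBit_of_suffix_of_prefix hl hls hlt,
    exists_suffix_prefix_of_testBit⟩

theorem exists_hasOLab {S T : Type} [Finite T] (E : S → T → Prop) : ∃ k, HasOLab E k := by
  classical
  have := Fintype.ofFinite T
  obtain ⟨n, ⟨e⟩⟩ := Finite.exists_equiv_fin T
  let f : T ↪ ℕ := e.toEmbedding.trans Fin.valEmbedding
  let code (u : S) : ℕ := ∑ i ∈ (Finset.univ.filter (E u)).map f, 2 ^ i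
  have hcode (u : S) : code u < 2 ^ n := Nat.geomSum_lt le_rfl (by simp [f])
  refine ⟨(Finset.range (2 ^ n)).sup (fun m => (leftWord m).length) ⊔
      (Finset.range n).sup (fun y => (rightWord y).length),
    hasOLab_of_overlaps_iff (fun u => leftWord (code u)) (fun v => rightWord (f v))
      (fun u v => ?_) (c := padLeft) (d := padRight) (by simp)
      (fun _ h => indexLE_of_mem_rightWord h) (fun _ h => indexLE_of_mem_leftWord h)
      (fun u => ?_) (fun v => ?_)⟩
  · rw [overlaps_leftWord_rightWord, Nat.testBit_sum_two_pow, Finset.mem_map', Finset.mem_filter]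
    simp
  · exact le_sup_of_le_left (Finset.le_sup (f := fun m => (leftWord m).length)
      (Finset.mem_range.2 (hcode u)))
  · exact le_sup_of_le_right (Finset.le_sup (f := fun y => (rightWord y).length)
      (Finset.mem_range.2 (by simp [f])))

noncomputable def pairDistinctness {S T : Type} (E : S → T → Prop) (a b : S) : ℕ :=
  max (Nat.card {t // E a t ∧ ¬E b t}) (Nat.card {t // E b t ∧ ¬E a t})

structure OverlapLabeling {S T : Type} (E : S → T → Prop) (k : ℕ) (α : Type) where
  left : S → List α
  right : T → List α
  length_left : ∀ u, (left u).length = k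
  length_right : ∀ v, (right v).length = k
  adj_iff : ∀ u v, E u v ↔ Overlaps (left u) (right v)

namespace OverlapLabeling

variable {S T α : Type} {E : S → T → Prop} {k : ℕ} (L : OverlapLabeling E k α)

def reverse : OverlapLabeling (flip E) k α where
  left v := (L.right v).reverse
  right u := (L.left u).reverse
  length_left v := by simp [L.length_right]
  length_right u := by simp [L.length_left]
  adj_iff v u := (L.adj_iff u v).trans overlaps_reverse.symm

def LeftSeparated (j : ℕ) : Prop := Function.Injective fun u => (L.left u).rtake j

def RightSeparated (j : ℕ) : Prop := Function.Injective fun v => (L.right v).take j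

lemma reverse_leftSeparated {j : ℕ} : L.reverse.LeftSeparated j ↔ L.RightSeparated j := by
  have : (fun v => (L.reverse.left v).rtake j) = List.reverse ∘ fun v => (L.right v).take j := by
    ext1 v
    simp [reverse, List.rtake_eq_reverse_take_reverse]
  rw [LeftSeparated, RightSeparated, this, List.reverse_injective.of_comp_iff]

lemma reverse_rightSeparated {j : ℕ} : L.reverse.RightSeparated j ↔ L.LeftSeparated j := by
  have : (fun u => (L.reverse.right u).take j) = List.reverse ∘ fun u => (L.left u).rtake j := by
    ext1 u
    simp [reverse, List.rtake_eq_reverse_take_reverse]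
  rw [LeftSeparated, RightSeparated, this, List.reverse_injective.of_comp_iff]

lemma le_of_ovAt {u : S} {v : T} {j : ℕ} (h : OvAt (L.left u) (L.right v) j) : j ≤ k :=
  L.length_left u ▸ h.2.1

lemma card_sdiff_le_of_rtake_eq {a b : S} {m : ℕ}
    (hab : (L.left a).rtake m = (L.left b).rtake m)
    (hsep : ∀ j, m < j → j ≤ k → L.RightSeparated j) :
    Nat.card {t // E a t ∧ ¬E b t} ≤ k - m := by
  refine (card_le_card_of_forall_ovAt (L.left a) L.right (J := Finset.Ioc m k)
    (fun t ⟨hat, hbt⟩ => ?_) fun j hj => hsep j (Finset.mem_Ioc.1 hj).1 (Finset.mem_Ioc.1 hj).2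
    ).trans_eq (Nat.card_Ioc m k)
  obtain ⟨j, hj⟩ := (L.adj_iff a t).1 hat
  refine ⟨j, Finset.mem_Ioc.2 ⟨not_le.1 fun hjm => hbt ((L.adj_iff b t).2 ⟨j, ?_⟩),
    L.le_of_ovAt hj⟩, hj⟩
  exact OvAt.of_rtake_eq hj hjm hab (by rw [L.length_left, L.length_left])

lemma pairDistinctness_le_of_rtake_eq {a b : S} {m : ℕ}
    (hab : (L.left a).rtake m = (L.left b).rtake m)
    (hsep : ∀ j, m < j → j ≤ k → L.RightSeparated j) : pairDistinctness E a b ≤ k - m :=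
  max_le (L.card_sdiff_le_of_rtake_eq hab hsep) (L.card_sdiff_le_of_rtake_eq hab.symm hsep)

lemma card_sdiff_lt_of_adj {a b : S} {v : T} (hav : E a v) (hbv : E b v)
    (hsep : ∀ j, 0 < j → j ≤ k → L.RightSeparated j) : Nat.card {t // E a t ∧ ¬E b t} < k := by
  classical
  obtain ⟨j₀, hj₀⟩ := (L.adj_iff a v).1 hav
  have hj₀k : j₀ ∈ Finset.Icc 1 k := Finset.mem_Icc.2 ⟨hj₀.1, L.le_of_ovAt hj₀⟩
  calc Nat.card {t // E a t ∧ ¬E b t} ≤ ((Finset.Icc 1 k).erase j₀).card := by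
        refine card_le_card_of_forall_ovAt (L.left a) L.right (fun t ⟨hat, hbt⟩ => ?_)
          fun j hj => ?_
        · obtain ⟨j, hj⟩ := (L.adj_iff a t).1 hat
          refine ⟨j, Finset.mem_erase.2 ⟨?_, Finset.mem_Icc.2 ⟨hj.1, L.le_of_ovAt hj⟩⟩, hj⟩
          rintro rfl
          obtain rfl : t = v := hsep j hj.1 (L.le_of_ovAt hj) (OvAt.take_eq_take hj hj₀)
          exact hbt hbv
        · obtain ⟨-, hj⟩ := Finset.mem_erase.1 hj
          exact hsep j (Finset.mem_Icc.1 hj).1 (Finset.mem_Icc.1 hj).2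
    _ < (Finset.Icc 1 k).card := Finset.card_erase_lt_of_mem hj₀k
    _ = k := by simp

lemma pairDistinctness_lt_of_adj {a b : S} {v : T} (hav : E a v) (hbv : E b v)
    (hsep : ∀ j, 0 < j → j ≤ k → L.RightSeparated j) : pairDistinctness E a b < k :=
  max_lt (L.card_sdiff_lt_of_adj hav hbv hsep) (L.card_sdiff_lt_of_adj hbv hav hsep)

theorem exists_pairDistinctness_lt (L : OverlapLabeling E k α)
    (hdeg : (∃ u : S, 2 ≤ Nat.card {t // E u t}) ∨ (∃ v : T, 2 ≤ Nat.card {s // E s v})) :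
    (∃ a b : S, a ≠ b ∧ pairDistinctness E a b < k) ∨
      (∃ a b : T, a ≠ b ∧ pairDistinctness (flip E) a b < k) := by
  classical
  set M := Nat.findGreatest (fun j => ¬(L.LeftSeparated j ∧ L.RightSeparated j)) k with hM
  have hsep (j : ℕ) (h₁ : M < j) (h₂ : j ≤ k) : L.LeftSeparated j ∧ L.RightSeparated j :=
    not_not.1 (Nat.findGreatest_is_greatest h₁ h₂)
  rcases Nat.eq_zero_or_pos M with hM0 | hM0
  · rw [hM0] at hsep
    rcases hdeg with ⟨u, hu⟩ | ⟨v, hv⟩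
    · obtain ⟨a, b, hab⟩ := exists_ne_of_two_le_card hu
      exact Or.inr ⟨a, b, Subtype.coe_injective.ne hab, L.reverse.pairDistinctness_lt_of_adj
        a.2 b.2 fun j h₁ h₂ => L.reverse_rightSeparated.2 (hsep j h₁ h₂).1⟩
    · obtain ⟨a, b, hab⟩ := exists_ne_of_two_le_card hv
      exact Or.inl ⟨a, b, Subtype.coe_injective.ne hab, L.pairDistinctness_lt_of_adj a.2 b.2
        fun j h₁ h₂ => (hsep j h₁ h₂).2⟩
  · have hlt : k - M < k := by
      have : M ≤ k := Nat.findGreatest_le k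
      omega
    rcases not_and_or.1 (Nat.findGreatest_of_ne_zero hM.symm hM0.ne') with h | h
    · obtain ⟨a, b, hab, hne⟩ := Function.not_injective_iff.1 h
      exact Or.inl ⟨a, b, hne, (L.pairDistinctness_le_of_rtake_eq hab
        fun j h₁ h₂ => (hsep j h₁ h₂).2).trans_lt hlt⟩
    · obtain ⟨a, b, hab, hne⟩ := Function.not_injective_iff.1 (L.reverse_leftSeparated.not.2 h)
      exact Or.inr ⟨a, b, hne, (L.reverse.pairDistinctness_le_of_rtake_eq hab
        fun j h₁ h₂ => L.reverse_rightSeparated.2 (hsep j h₁ h₂).1).trans_lt hlt⟩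

end OverlapLabeling

theorem readability_ge_distinctness_succ_general
    {S T : Type} [Fintype T] (E : S → T → Prop)
    (hdeg : (∃ u : S, 2 ≤ Nat.card {t // E u t}) ∨ (∃ v : T, 2 ≤ Nat.card {s // E s v}))
    (dt : ℕ)
    (hdt : dt = sInf {d |
      (∃ u v : S, u ≠ v ∧
        d = max (Nat.card {t // E u t ∧ ¬ E v t}) (Nat.card {t // E v t ∧ ¬ E u t})) ∨
      (∃ u v : T, u ≠ v ∧
        d = max (Nat.card {s // E s u ∧ ¬ E s v}) (Nat.card {s // E s v ∧ ¬ E s u}))}) :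
    dt + 1 ≤ readability E := by
  obtain ⟨α, ℓS, ℓT, hS, hT, hE⟩ : HasOLab E (readability E) := Nat.sInf_mem (exists_hasOLab E)
  subst hdt
  rcases OverlapLabeling.exists_pairDistinctness_lt ⟨ℓS, ℓT, hS, hT, hE⟩ hdeg with
    ⟨a, b, hab, hlt⟩ | ⟨a, b, hab, hlt⟩
  · exact (Nat.sInf_le (Or.inl ⟨a, b, hab, rfl⟩)).trans_lt hlt
  · exact (Nat.sInf_le (Or.inr ⟨a, b, hab, rfl⟩)).trans_lt hlt

/-- Lower bound on readability via distinctness: for a bipartite graph of maximum degree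
at least two, `r(G) ≥ dt(G) + 1`. -/
theorem readability_ge_distinctness_succ
    {S T : Type} [Fintype S] [Fintype T] (E : S → T → Prop)
    (hdeg : (∃ u : S, 2 ≤ Nat.card {t // E u t}) ∨ (∃ v : T, 2 ≤ Nat.card {s // E s v}))
    (dt : ℕ)
    (hdt : dt = sInf {d |
      (∃ u v : S, u ≠ v ∧
        d = max (Nat.card {t // E u t ∧ ¬ E v t}) (Nat.card {t // E v t ∧ ¬ E u t})) ∨
      (∃ u v : T, u ≠ v ∧
        d = max (Nat.card {s // E s u ∧ ¬ E s v}) (Nat.card {s // E s v ∧ ¬ E s u}))}) :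
    dt + 1 ≤ readability E :=
  readability_ge_distinctness_succ_general E hdeg dt hdt
end

section
/- Let F be the bipartite graph on 7 vertices obtained from the 2×3 grid graph (the domino) by adding a new vertex adjacent to one vertex of the domino of degree 3. Then F has no overlap labeling of length at most 2; that is, r(F) ≥ 3. -/
/-- The bipartite graph `F`: the 2×3 grid graph (domino) with vertices `(i,j)`,
`i < 2`, `j < 3`, together with a pendant vertex attached to the degree-3 vertex `(1,1)`.
Part `S` (even parity) is `{s0 = (0,0), s1 = (0,2), s2 = (1,1)}` and part `T` (odd parity)
is `{t0 = (0,1), t1 = (1,0), t2 = (1,2), t3 = pendant}`; the edges are those of the domino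
`s0t0, s0t1, s1t0, s1t2, s2t0, s2t1, s2t2` together with the pendant edge `s2t3`. -/
def FAdj : Fin 3 → Fin 4 → Prop := fun s t =>
  (s = 0 ∧ (t = 0 ∨ t = 1)) ∨ (s = 1 ∧ (t = 0 ∨ t = 2)) ∨ s = 2


set_option linter.unnecessarySeqFocus false

lemma ov0' {α : Type} (t : List α) : ¬ Overlaps [] t := by
  rintro ⟨k, hk, hk1, _⟩; simp at hk1; omega

lemma ov1' {α : Type} (a c : α) (t : List α) (ht : t = [c]) : Overlaps [a] t ↔ a = c := by
  subst ht
  constructor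
  · rintro ⟨k, hk, hk1, hk2, h⟩
    simp only [List.length_cons, List.length_nil] at hk1
    interval_cases k <;> simp_all
  · rintro rfl; exact ⟨1, by simp [OvAt]⟩

lemma ov2' {α : Type} (a b c d : α) : Overlaps [a,b] [c,d] ↔ b = c ∨ (a = c ∧ b = d) := by
  constructor
  · rintro ⟨k, hk, hk1, hk2, h⟩
    simp only [List.length_cons, List.length_nil] at hk1
    interval_cases k <;> simp_all
  · rintro (rfl | ⟨rfl, rfl⟩)
    · exact ⟨1, by simp [OvAt]⟩
    · exact ⟨2, by simp [OvAt]⟩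

lemma ov3' {α : Type} (a b c d e f : α) :
    Overlaps [a,b,c] [d,e,f] ↔ c = d ∨ (b = d ∧ c = e) ∨ (a = d ∧ b = e ∧ c = f) := by
  constructor
  · rintro ⟨k, hk, hk1, hk2, h⟩
    simp only [List.length_cons, List.length_nil] at hk1
    interval_cases k <;> simp_all
  · rintro (rfl | ⟨rfl, rfl⟩ | ⟨rfl, rfl, rfl⟩)
    · exact ⟨1, by simp [OvAt]⟩
    · exact ⟨2, by simp [OvAt]⟩
    · exact ⟨3, by simp [OvAt]⟩

set_option maxHeartbeats 1000000 in
lemma key2 {α : Type} (a0 b0 a1 b1 a2 b2 c0 d0 c1 d1 c2 d2 c3 d3 : α)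
    (E00 : b0 = c0 ∨ (a0 = c0 ∧ b0 = d0))
    (E01 : b0 = c1 ∨ (a0 = c1 ∧ b0 = d1))
    (N02 : ¬ (b0 = c2 ∨ (a0 = c2 ∧ b0 = d2)))
    (N03 : ¬ (b0 = c3 ∨ (a0 = c3 ∧ b0 = d3)))
    (E10 : b1 = c0 ∨ (a1 = c0 ∧ b1 = d0))
    (N11 : ¬ (b1 = c1 ∨ (a1 = c1 ∧ b1 = d1)))
    (E12 : b1 = c2 ∨ (a1 = c2 ∧ b1 = d2))
    (N13 : ¬ (b1 = c3 ∨ (a1 = c3 ∧ b1 = d3)))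
    (E20 : b2 = c0 ∨ (a2 = c0 ∧ b2 = d0))
    (E21 : b2 = c1 ∨ (a2 = c1 ∧ b2 = d1))
    (E22 : b2 = c2 ∨ (a2 = c2 ∧ b2 = d2))
    (E23 : b2 = c3 ∨ (a2 = c3 ∧ b2 = d3)) : False := by
  rcases E00 with h|⟨h,h'⟩ <;> subst h <;> try subst h'
  all_goals (rcases E01 with h|⟨h,h'⟩ <;> subst h <;> try subst h')
  all_goals (rcases E10 with h|⟨h,h'⟩ <;> subst h <;> try subst h')
  all_goals (rcases E12 with h|⟨h,h'⟩ <;> subst h <;> try subst h')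
  all_goals (rcases E20 with h|⟨h,h'⟩ <;> try subst h <;> try subst h')
  all_goals (rcases E21 with h|⟨h,h'⟩ <;> try subst h <;> try subst h')
  all_goals (rcases E22 with h|⟨h,h'⟩ <;> try subst h <;> try subst h')
  all_goals (rcases E23 with h|⟨h,h'⟩ <;> try subst h <;> try subst h')
  all_goals subst_vars
  all_goals simp_all

lemma no_lab_le_two : ∀ k ≤ 2, ¬ HasOLab FAdj k := by
  intro k hk hlab
  obtain ⟨α, ℓS, ℓT, hS, hT, hE⟩ := hlab
  interval_cases k
  · have h23 : Overlaps (ℓS 2) (ℓT 3) := (hE 2 3).mp (by simp [FAdj])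
    rw [List.length_eq_zero_iff.mp (hS 2)] at h23
    exact ov0' _ h23
  · obtain ⟨a0, e0⟩ := List.length_eq_one_iff.mp (hS 0)
    obtain ⟨a2, e2⟩ := List.length_eq_one_iff.mp (hS 2)
    obtain ⟨c0, f0⟩ := List.length_eq_one_iff.mp (hT 0)
    obtain ⟨c3, f3⟩ := List.length_eq_one_iff.mp (hT 3)
    have h00 : a0 = c0 := (ov1' _ _ _ f0).mp (e0 ▸ (hE 0 0).mp (by simp [FAdj]))
    have h20 : a2 = c0 := (ov1' _ _ _ f0).mp (e2 ▸ (hE 2 0).mp (by simp [FAdj]))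
    have h23 : a2 = c3 := (ov1' _ _ _ f3).mp (e2 ▸ (hE 2 3).mp (by simp [FAdj]))
    have h03 : ¬ a0 = c3 := fun h => (by simp [FAdj] : ¬ FAdj 0 3)
      ((hE 0 3).mpr (e0 ▸ (ov1' _ _ _ f3).mpr h))
    exact h03 (h00.trans (h20 ▸ h23))
  · obtain ⟨a0, b0, e0⟩ := List.length_eq_two.mp (hS 0)
    obtain ⟨a1, b1, e1⟩ := List.length_eq_two.mp (hS 1)
    obtain ⟨a2, b2, e2⟩ := List.length_eq_two.mp (hS 2)
    obtain ⟨c0, d0, f0⟩ := List.length_eq_two.mp (hT 0)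
    obtain ⟨c1, d1, f1⟩ := List.length_eq_two.mp (hT 1)
    obtain ⟨c2, d2, f2⟩ := List.length_eq_two.mp (hT 2)
    obtain ⟨c3, d3, f3⟩ := List.length_eq_two.mp (hT 3)
    have h00 := (hE 0 0).mp (by simp [FAdj])
    rw [e0, f0] at h00
    have h01 := (hE 0 1).mp (by simp [FAdj])
    rw [e0, f1] at h01
    have h02 : ¬ Overlaps (ℓS 0) (ℓT 2) := fun h => (by simp [FAdj] : ¬ FAdj 0 2) ((hE 0 2).mpr h)
    rw [e0, f2] at h02
    have h03 : ¬ Overlaps (ℓS 0) (ℓT 3) := fun h => (by simp [FAdj] : ¬ FAdj 0 3) ((hE 0 3).mpr h)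
    rw [e0, f3] at h03
    have h10 := (hE 1 0).mp (by simp [FAdj])
    rw [e1, f0] at h10
    have h11 : ¬ Overlaps (ℓS 1) (ℓT 1) := fun h => (by simp [FAdj] : ¬ FAdj 1 1) ((hE 1 1).mpr h)
    rw [e1, f1] at h11
    have h12 := (hE 1 2).mp (by simp [FAdj])
    rw [e1, f2] at h12
    have h13 : ¬ Overlaps (ℓS 1) (ℓT 3) := fun h => (by simp [FAdj] : ¬ FAdj 1 3) ((hE 1 3).mpr h)
    rw [e1, f3] at h13
    have h20 := (hE 2 0).mp (by simp [FAdj])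
    rw [e2, f0] at h20
    have h21 := (hE 2 1).mp (by simp [FAdj])
    rw [e2, f1] at h21
    have h22 := (hE 2 2).mp (by simp [FAdj])
    rw [e2, f2] at h22
    have h23 := (hE 2 3).mp (by simp [FAdj])
    rw [e2, f3] at h23
    exact key2 a0 b0 a1 b1 a2 b2 c0 d0 c1 d1 c2 d2 c3 d3
      ((ov2' _ _ _ _).mp h00) ((ov2' _ _ _ _).mp h01) (fun hh => h02 ((ov2' _ _ _ _).mpr hh)) (fun hh => h03 ((ov2' _ _ _ _).mpr hh)) ((ov2' _ _ _ _).mp h10) (fun hh => h11 ((ov2' _ _ _ _).mpr hh)) ((ov2' _ _ _ _).mp h12) (fun hh => h13 ((ov2' _ _ _ _).mpr hh)) ((ov2' _ _ _ _).mp h20) ((ov2' _ _ _ _).mp h21) ((ov2' _ _ _ _).mp h22) ((ov2' _ _ _ _).mp h23)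

lemma lab3 : HasOLab FAdj 3 := by
  refine ⟨ℕ, ![[0,0,0],[0,0,1],[2,1,0]], ![[0,0,1],[0,0,0],[1,0,0],[2,1,0]], ?_, ?_, ?_⟩
  · intro u; fin_cases u <;> rfl
  · intro v; fin_cases v <;> rfl
  · intro u v
    fin_cases u <;> fin_cases v <;>
      simp only [Matrix.cons_val_zero, Matrix.cons_val_one, Matrix.head_cons,
        Matrix.cons_val_fin_one, Matrix.cons_val', Matrix.empty_val'] <;>
      rw [show FAdj _ _ ↔ _ from Iff.rfl] <;>
      simp [FAdj, ov3']


/-- The graph `F` has no overlap labeling with strings of length at most 2;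
that is, `r(F) ≥ 3`. -/
theorem F_no_overlap_labeling_of_length_le_two :
    (∀ k ≤ 2, ¬ HasOLab FAdj k) ∧ 3 ≤ readability FAdj := by
  refine ⟨no_lab_le_two, ?_⟩
  have hmem : readability FAdj ∈ {k | HasOLab FAdj k} := Nat.sInf_mem ⟨3, lab3⟩
  by_contra h
  push_neg at h
  exact no_lab_le_two _ (by omega) hmem
end
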